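/- Any accumulation point (x*, p*) of the sequence of outer iterates of Algorithm 1 is an optimal solution of min ‖x‖₁ subject to Φx = p, Γ(p) = b, and |‖x_t*‖₁ − x†| = O(1/μ_{t−1}), where x† is the optimal value. -/
import Mathlib


open Matrix

noncomputable def softThresh (l w : ℝ) : ℝ := Real.sign w * max (|w| - l) 0

noncomputable def softThreshV {ι : Type*} (l : ℝ) (w : ι → ℝ) : ι → ℝ :=
  fun i => softThresh l (w i)

noncomputable def l1norm {ι : Type*} [Fintype ι] (x : ι → ℝ) : ℝ := ∑ i, |x i|

noncomputable def l2norm {ι : Type*} [Fintype ι] (x : ι → ℝ) : ℝ :=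
  Real.sqrt (∑ i, (x i)^2)

noncomputable def ip {ι : Type*} [Fintype ι] (u v : ι → ℝ) : ℝ := ∑ i, u i * v i

noncomputable def lag {ι : Type*} [Fintype ι] (Φ : Matrix ι ι ℝ) (y : ι → ℝ) (μ : ℝ)
    (x p : ι → ℝ) : ℝ :=
  l1norm x + ip (p - Φ.mulVec x) y + (μ/2) * (l2norm (p - Φ.mulVec x))^2

section helpers
variable {ι : Type*} [Fintype ι]

lemma ip_self_nonneg (u : ι → ℝ) : 0 ≤ ip u u :=
  Finset.sum_nonneg fun _ _ => mul_self_nonneg _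

lemma l2norm_sq (u : ι → ℝ) : (l2norm u)^2 = ip u u := by
  rw [l2norm, Real.sq_sqrt (Finset.sum_nonneg fun i _ => sq_nonneg _)]
  simp [ip, sq]

lemma l2norm_eq (u : ι → ℝ) : l2norm u = Real.sqrt (ip u u) := by
  rw [l2norm]; congr 1; simp [ip, sq]

lemma l2norm_nonneg (u : ι → ℝ) : 0 ≤ l2norm u := Real.sqrt_nonneg _

lemma ip_comm (u v : ι → ℝ) : ip u v = ip v u := by
  simp [ip, mul_comm]

lemma ip_sub_left (u v w : ι → ℝ) : ip (u - v) w = ip u w - ip v w := by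
  simp [ip, sub_mul, Finset.sum_sub_distrib]

lemma ip_smul_left (c : ℝ) (u v : ι → ℝ) : ip (c • u) v = c * ip u v := by
  simp [ip, Finset.mul_sum, mul_assoc]

lemma ip_add_right (u v w : ι → ℝ) : ip u (v + w) = ip u v + ip u w := by
  simp [ip, mul_add, Finset.sum_add_distrib]

lemma ip_smul_right (c : ℝ) (u v : ι → ℝ) : ip u (c • v) = c * ip u v := by
  simp [ip, Finset.mul_sum]; exact Finset.sum_congr rfl fun i _ => by ring

lemma ip_expand (a b : ι → ℝ) (c : ℝ) :
    ip (a - c • b) (a - c • b) = ip a a - 2*c*(ip a b) + c^2 * ip b b := by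
  have h : ∀ i : ι, (a i - c * b i) * (a i - c * b i)
      = a i * a i - 2*c*(a i * b i) + c^2 * (b i * b i) := fun i => by ring
  simp only [ip, Pi.sub_apply, Pi.smul_apply, smul_eq_mul, h,
    Finset.sum_add_distrib, Finset.sum_sub_distrib, ← Finset.mul_sum]

lemma abs_ip_le (u v : ι → ℝ) : |ip u v| ≤ l2norm u * l2norm v := by
  have h := Finset.sum_mul_sq_le_sq_mul_sq Finset.univ u v
  refine abs_le_of_sq_le_sq ?_ (mul_nonneg (l2norm_nonneg _) (l2norm_nonneg _))
  rw [mul_pow, l2norm_sq, l2norm_sq]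
  simpa [ip, sq] using h

lemma abs_le_l2norm (u : ι → ℝ) (i : ι) : |u i| ≤ l2norm u := by
  rw [← Real.sqrt_sq_eq_abs]
  exact Real.sqrt_le_sqrt (Finset.single_le_sum (f := fun j => (u j)^2)
    (fun j _ => sq_nonneg _) (Finset.mem_univ i))

lemma l1norm_le_sqrt_card (u : ι → ℝ) :
    l1norm u ≤ Real.sqrt (Fintype.card ι) * l2norm u := by
  have h : (l1norm u)^2 ≤ (Fintype.card ι : ℝ) * ∑ i, (u i)^2 := by
    simpa [l1norm, sq_abs] using
      sq_sum_le_card_mul_sum_sq (s := (Finset.univ : Finset ι)) (f := fun i => |u i|)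
  have h2 := Real.sqrt_le_sqrt h
  rw [Real.sqrt_sq, Real.sqrt_mul (by positivity)] at h2
  · exact h2
  · exact Finset.sum_nonneg fun i _ => abs_nonneg _

lemma l1norm_add_le (u v : ι → ℝ) : l1norm (u + v) ≤ l1norm u + l1norm v := by
  rw [l1norm, l1norm, l1norm, ← Finset.sum_add_distrib]
  exact Finset.sum_le_sum fun i _ => abs_add_le _ _

variable [DecidableEq ι]

lemma ip_mulVec_swap (A : Matrix ι ι ℝ) (u v : ι → ℝ) :
    ip (A.mulVec u) v = ip u (Aᵀ.mulVec v) := by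
  simp only [ip, mulVec, dotProduct, transpose_apply, Finset.sum_mul, Finset.mul_sum]
  rw [Finset.sum_comm]
  exact Finset.sum_congr rfl fun i _ => Finset.sum_congr rfl fun j _ => by ring

lemma ip_mulVec_self (A : Matrix ι ι ℝ) (hA : Aᵀ * A = 1) (u v : ι → ℝ) :
    ip (A.mulVec u) (A.mulVec v) = ip u v := by
  rw [ip_mulVec_swap, mulVec_mulVec, hA, one_mulVec]

lemma ip_single_left (j : ι) (w : ι → ℝ) : ip (Pi.single j 1) w = w j := by
  simp [ip, Pi.single_apply]

lemma ip_single_self (j : ι) : ip (Pi.single j (1:ℝ)) (Pi.single j 1) = 1 := by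
  simp [ip, Pi.single_apply]

lemma l1norm_smul_single (c : ℝ) (j : ι) : l1norm (c • (Pi.single j 1 : ι → ℝ)) = |c| := by
  simp [l1norm, Pi.single_apply, apply_ite, Finset.sum_ite_eq']

lemma lag_eq (Φ : Matrix ι ι ℝ) (y : ι → ℝ) (μ : ℝ) (x p : ι → ℝ) :
    lag Φ y μ x p = l1norm x + ip (p - Φ.mulVec x) y
      + μ/2 * ip (p - Φ.mulVec x) (p - Φ.mulVec x) := by
  rw [lag, l2norm_sq]

end helpers

set_option maxHeartbeats 1000000 in
/-- Any accumulation point `(x*, p*)` of the outer iterates of Algorithm 1 is an optimal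
solution of `min ‖x‖₁ s.t. Φx = p, Γ(p) = b`, and `|‖x_t*‖₁ - x†| = O(1/μ_{t-1})`. -/
theorem alg1_convergence {n m : ℕ}
    (Φ : Matrix (Fin n ⊕ Fin m) (Fin n ⊕ Fin m) ℝ) (hΦ : Φᵀ * Φ = 1)
    (b : Fin n → ℝ) (μ : ℕ → ℝ) (hμ : ∀ t, 0 < μ t) (hμmono : StrictMono μ)
    (hμtop : Filter.Tendsto μ Filter.atTop Filter.atTop)
    (xs ps ys : ℕ → (Fin n ⊕ Fin m) → ℝ)
    (hfeas : ∀ t i, ps (t+1) (Sum.inl i) = b i)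
    (hmin : ∀ t (x p : (Fin n ⊕ Fin m) → ℝ), (∀ i, p (Sum.inl i) = b i) →
      lag Φ (ys t) (μ t) (xs (t+1)) (ps (t+1)) ≤ lag Φ (ys t) (μ t) x p)
    (hy : ∀ t, ys (t+1) = ys t + μ t • (ps (t+1) - Φ.mulVec (xs (t+1))))
    (hy0 : ys 0 = 0)
    (xstar pstar : (Fin n ⊕ Fin m) → ℝ) (φ : ℕ → ℕ) (hφ : StrictMono φ)
    (hxlim : Filter.Tendsto (fun k => xs (φ k)) Filter.atTop (nhds xstar))
    (hplim : Filter.Tendsto (fun k => ps (φ k)) Filter.atTop (nhds pstar))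
    (xdag : ℝ)
    (hdag : IsLeast {r : ℝ | ∃ (x p : (Fin n ⊕ Fin m) → ℝ),
      Φ.mulVec x = p ∧ (∀ i, p (Sum.inl i) = b i) ∧ l1norm x = r} xdag) :
    (Φ.mulVec xstar = pstar ∧ (∀ i, pstar (Sum.inl i) = b i) ∧ l1norm xstar = xdag) ∧
    ∃ C : ℝ, ∀ t : ℕ, 1 ≤ t → |l1norm (xs t) - xdag| ≤ C / μ (t - 1) := by
  classical
  obtain ⟨⟨xd, pd, hxd1, hxd2, hxd3⟩, hlb⟩ := hdag
  have hΦΦT : Φ * Φᵀ = 1 := mul_eq_one_comm.mpr hΦ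
  set B : ℝ := Real.sqrt ((n:ℝ) + m) with hBdef
  have hNnn : (0:ℝ) ≤ (n:ℝ) + m := by positivity
  have hBnn : 0 ≤ B := Real.sqrt_nonneg _
  have hBB : B * B = (n:ℝ) + m := Real.mul_self_sqrt hNnn
  set R : ℕ → (Fin n ⊕ Fin m) → ℝ := fun t => ps t - Φ.mulVec (xs t) with hRdef
  -- Step A : multipliers are bounded
  have ybound : ∀ t, l2norm (ys t) ≤ B := by
    intro t
    have key : ip (ys t) (ys t) ≤ (n:ℝ) + m := by
      cases t with
      | zero => rw [hy0]; simpa [ip] using hNnn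
      | succ t =>
        have hcomp : ∀ j, |ip (Φ.mulVec (Pi.single j 1)) (ys (t+1))| ≤ 1 := by
          intro j
          set d : (Fin n ⊕ Fin m) → ℝ := Pi.single j 1 with hd
          have hexp : ∀ ε : ℝ,
              0 ≤ |ε| - ε * ip (Φ.mulVec (d)) (ys (t+1)) + μ t * ε^2/2 := by
            intro ε
            have h1 := hmin t (xs (t+1) + ε • d) (ps (t+1)) (fun i => hfeas t i)
            have hsub : ps (t+1) - Φ.mulVec (xs (t+1) + ε • d)
                = (ps (t+1) - Φ.mulVec (xs (t+1))) - ε • Φ.mulVec (d) := by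
              rw [mulVec_add, mulVec_smul]; abel
            rw [lag_eq, lag_eq, hsub] at h1
            have hdd : ip (Φ.mulVec (d)) (Φ.mulVec (d)) = 1 := by
              rw [ip_mulVec_self Φ hΦ, hd]; exact ip_single_self j
            have e1 : ip (ps (t+1) - Φ.mulVec (xs (t+1)) - ε • Φ.mulVec d) (ys t)
                = ip (ps (t+1) - Φ.mulVec (xs (t+1))) (ys t) - ε * ip (Φ.mulVec d) (ys t) := by
              rw [ip_sub_left (ps (t+1) - Φ.mulVec (xs (t+1))), ip_smul_left]
            have e2 := ip_expand (ps (t+1) - Φ.mulVec (xs (t+1))) (Φ.mulVec d) ε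
            rw [e1, e2, hdd] at h1
            have hl1 : l1norm (xs (t+1) + ε • d) ≤ l1norm (xs (t+1)) + |ε| := by
              refine (l1norm_add_le _ _).trans ?_
              rw [hd, l1norm_smul_single]
            have hynew : ip (Φ.mulVec (d)) (ys (t+1))
                = ip (Φ.mulVec (d)) (ys t)
                  + μ t * ip (Φ.mulVec (d)) (ps (t+1) - Φ.mulVec (xs (t+1))) := by
              rw [hy t, ip_add_right, ip_smul_right]
            have hcm : ip (ps (t+1) - Φ.mulVec (xs (t+1))) (Φ.mulVec (d))
                = ip (Φ.mulVec (d)) (ps (t+1) - Φ.mulVec (xs (t+1))) :=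
              ip_comm _ _
            rw [hcm] at h1
            rw [hynew]
            nlinarith [h1, hl1]
          rw [abs_le]
          constructor
          · rw [neg_le]
            refine le_of_forall_pos_le_add fun c hc => ?_
            have hε : (0:ℝ) < 2*c/μ t := div_pos (by linarith) (hμ t)
            have h := hexp (-(2*c/μ t))
            rw [abs_neg, abs_of_pos hε] at h
            have hμ0 : μ t ≠ 0 := (hμ t).ne'
            have h2 : μ t * (-(2*c/μ t))^2/2 = c * (2*c/μ t) := by
              field_simp
            rw [h2] at h
            nlinarith [h, hε]
          · refine le_of_forall_pos_le_add fun c hc => ?_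
            have hε : (0:ℝ) < 2*c/μ t := div_pos (by linarith) (hμ t)
            have h := hexp (2*c/μ t)
            rw [abs_of_pos hε] at h
            have hμ0 : μ t ≠ 0 := (hμ t).ne'
            have h2 : μ t * (2*c/μ t)^2/2 = c * (2*c/μ t) := by
              field_simp
            rw [h2] at h
            nlinarith [h, hε]
        -- sum the squares
        have hw : ∀ j, ip (Φ.mulVec (Pi.single j 1)) (ys (t+1)) = Φᵀ.mulVec (ys (t+1)) j := by
          intro j; rw [ip_mulVec_swap, ip_single_left]
        have hsum : ip (ys (t+1)) (ys (t+1))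
            = ∑ j, (ip (Φ.mulVec (Pi.single j 1)) (ys (t+1)))^2 := by
          have := ip_mulVec_self Φᵀ (by rw [transpose_transpose]; exact hΦΦT)
            (ys (t+1)) (ys (t+1))
          rw [← this]
          simp only [hw]
          simp [ip, sq]
        rw [hsum]
        calc ∑ j, (ip (Φ.mulVec (Pi.single j 1)) (ys (t+1)))^2
            ≤ ∑ _j : Fin n ⊕ Fin m, (1:ℝ) := by
              refine Finset.sum_le_sum fun j _ => ?_
              have := hcomp j
              nlinarith [this, abs_nonneg (ip (Φ.mulVec (Pi.single j 1)) (ys (t+1))),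
                sq_abs (ip (Φ.mulVec (Pi.single j 1)) (ys (t+1)))]
          _ = (n:ℝ) + m := by simp
    rw [l2norm_eq]
    calc Real.sqrt (ip (ys t) (ys t)) ≤ Real.sqrt ((n:ℝ)+m) := Real.sqrt_le_sqrt key
      _ = B := rfl
  -- Step B : upper bound from minimality against the optimum
  have hub : ∀ t, l1norm (xs (t+1)) + ip (R (t+1)) (ys t)
      + μ t/2 * ip (R (t+1)) (R (t+1)) ≤ xdag := by
    intro t
    have h := hmin t xd pd hxd2
    rw [lag_eq, lag_eq] at h
    rw [hxd1, sub_self] at h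
    simpa [ip, hxd3, hRdef] using h
  -- Step C : lower bound via projection of p onto the range of Φ
  have hlow : ∀ t, xdag ≤ l1norm (xs (t+1)) + B * l2norm (R (t+1)) := by
    intro t
    have hmem : xdag ≤ l1norm (Φᵀ.mulVec (ps (t+1))) :=
      hlb ⟨Φᵀ.mulVec (ps (t+1)), ps (t+1),
        by rw [mulVec_mulVec, hΦΦT, one_mulVec], fun i => hfeas t i, rfl⟩
    have heq : Φᵀ.mulVec (ps (t+1)) = xs (t+1) + Φᵀ.mulVec (R (t+1)) := by
      have hps : ps (t+1) = Φ.mulVec (xs (t+1)) + R (t+1) := by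
        simp [hRdef]
      rw [hps, mulVec_add, mulVec_mulVec, hΦ, one_mulVec]
    have hl2 : l2norm (Φᵀ.mulVec (R (t+1))) = l2norm (R (t+1)) := by
      rw [l2norm_eq, l2norm_eq,
        ip_mulVec_self Φᵀ (by rw [transpose_transpose]; exact hΦΦT)]
    have hcard : Real.sqrt ((Fintype.card (Fin n ⊕ Fin m) : ℝ)) = B := by
      rw [hBdef]; congr 1; simp
    calc xdag ≤ l1norm (Φᵀ.mulVec (ps (t+1))) := hmem
      _ = l1norm (xs (t+1) + Φᵀ.mulVec (R (t+1))) := by rw [heq]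
      _ ≤ l1norm (xs (t+1)) + l1norm (Φᵀ.mulVec (R (t+1))) := l1norm_add_le _ _
      _ ≤ l1norm (xs (t+1)) + B * l2norm (R (t+1)) := by
          have := l1norm_le_sqrt_card (Φᵀ.mulVec (R (t+1)))
          rw [hcard, hl2] at this
          linarith
  -- Cauchy-Schwarz bound for the cross term
  have hipy : ∀ t, |ip (R (t+1)) (ys t)| ≤ l2norm (R (t+1)) * B := fun t =>
    (abs_ip_le _ _).trans (mul_le_mul_of_nonneg_left (ybound t) (l2norm_nonneg _))
  -- Step D : residual bound
  have hrb : ∀ t, l2norm (R (t+1)) ≤ 4*B/μ t := by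
    intro t
    have h1 := hub t
    have h2 := hlow t
    have h3 := hipy t
    have hss : ip (R (t+1)) (R (t+1)) = (l2norm (R (t+1)))^2 := (l2norm_sq _).symm
    rcases eq_or_lt_of_le (l2norm_nonneg (R (t+1))) with h | h
    · rw [← h]; exact div_nonneg (by positivity) (hμ t).le
    · rw [le_div_iff₀ (hμ t)]
      nlinarith [abs_le.mp h3, hμ t]
  -- Step E : main estimate
  have hmain : ∀ t, |l1norm (xs (t+1)) - xdag| ≤ B * l2norm (R (t+1)) := by
    intro t
    have h1 := hub t
    have h2 := hlow t
    have h3 := hipy t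
    have hss : ip (R (t+1)) (R (t+1)) = (l2norm (R (t+1)))^2 := (l2norm_sq _).symm
    rw [abs_le]
    constructor
    · nlinarith
    · nlinarith [abs_le.mp h3, hμ t, sq_nonneg (l2norm (R (t+1))), hμ t,
        mul_nonneg (le_of_lt (hμ t)) (sq_nonneg (l2norm (R (t+1))))]
  have hC : ∀ t : ℕ, 1 ≤ t → |l1norm (xs t) - xdag| ≤ (4*((n:ℝ)+m)) / μ (t-1) := by
    intro t ht
    obtain ⟨s, rfl⟩ : ∃ s, t = s + 1 := ⟨t - 1, by omega⟩
    simp only [Nat.add_sub_cancel]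
    calc |l1norm (xs (s+1)) - xdag| ≤ B * l2norm (R (s+1)) := hmain s
      _ ≤ B * (4*B/μ s) := by
          exact mul_le_mul_of_nonneg_left (hrb s) hBnn
      _ = (4*((n:ℝ)+m)) / μ s := by
          rw [← hBB]; ring
  -- limits along the subsequence
  have hφge : ∀ k, k ≤ φ k := fun k => hφ.le_apply
  have hφ1 : Filter.Tendsto (fun k => φ k - 1) Filter.atTop Filter.atTop := by
    refine Filter.tendsto_atTop_atTop.mpr fun bb => ⟨bb + 1, fun a ha => ?_⟩
    have := hφge a; omega
  have hμφ := hμtop.comp hφ1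
  have hRbound : ∀ k, 1 ≤ k → l2norm (R (φ k)) ≤ 4*B / μ (φ k - 1) := by
    intro k hk
    have h1 : 1 ≤ φ k := le_trans hk (hφge k)
    obtain ⟨s, hs⟩ : ∃ s, φ k = s + 1 := ⟨φ k - 1, by omega⟩
    rw [hs, Nat.add_sub_cancel]
    exact hrb s
  have hbd0 : Filter.Tendsto (fun k => 4*B / μ (φ k - 1)) Filter.atTop (nhds 0) :=
    Filter.Tendsto.div_atTop tendsto_const_nhds hμφ
  have hfeq : Φ.mulVec xstar = pstar := by
    funext i
    have hp_i := tendsto_pi_nhds.mp hplim i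
    have hΦx : Filter.Tendsto (fun k => Φ.mulVec (xs (φ k)) i) Filter.atTop
        (nhds (Φ.mulVec xstar i)) := by
      simp only [mulVec, dotProduct]
      exact tendsto_finset_sum _ fun j _ =>
        (tendsto_pi_nhds.mp hxlim j).const_mul _
    have hR_i : Filter.Tendsto (fun k => R (φ k) i) Filter.atTop
        (nhds (pstar i - Φ.mulVec xstar i)) := by
      simpa [hRdef] using hp_i.sub hΦx
    have hR0 : Filter.Tendsto (fun k => R (φ k) i) Filter.atTop (nhds 0) := by
      refine squeeze_zero_norm' ?_ hbd0
      filter_upwards [Filter.eventually_ge_atTop 1] with k hk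
      rw [Real.norm_eq_abs]
      exact (abs_le_l2norm _ i).trans (hRbound k hk)
    have huniq := tendsto_nhds_unique hR_i hR0
    linarith [huniq]
  have hfeas_star : ∀ i, pstar (Sum.inl i) = b i := by
    intro i
    have hp_i := tendsto_pi_nhds.mp hplim (Sum.inl i)
    have hconst : Filter.Tendsto (fun k => ps (φ k) (Sum.inl i)) Filter.atTop (nhds (b i)) := by
      refine Filter.Tendsto.congr' ?_ tendsto_const_nhds
      filter_upwards [Filter.eventually_ge_atTop 1] with k hk
      have h1 : 1 ≤ φ k := le_trans hk (hφge k)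
      obtain ⟨s, hs⟩ : ∃ s, φ k = s + 1 := ⟨φ k - 1, by omega⟩
      rw [hs]
      exact (hfeas s i).symm
    exact tendsto_nhds_unique hp_i hconst
  have hl1cont : Continuous (l1norm : ((Fin n ⊕ Fin m) → ℝ) → ℝ) :=
    continuous_finset_sum _ fun i _ => (continuous_apply i).abs
  have h1 : Filter.Tendsto (fun k => l1norm (xs (φ k))) Filter.atTop (nhds (l1norm xstar)) :=
    (hl1cont.tendsto xstar).comp hxlim
  have hCbd : Filter.Tendsto (fun k => (4*((n:ℝ)+m)) / μ (φ k - 1)) Filter.atTop (nhds 0) :=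
    Filter.Tendsto.div_atTop tendsto_const_nhds hμφ
  have h2 : Filter.Tendsto (fun k => l1norm (xs (φ k)) - xdag) Filter.atTop (nhds 0) := by
    refine squeeze_zero_norm' ?_ hCbd
    filter_upwards [Filter.eventually_ge_atTop 1] with k hk
    have h1k : 1 ≤ φ k := le_trans hk (hφge k)
    simpa [Real.norm_eq_abs] using hC (φ k) h1k
  have h3 : Filter.Tendsto (fun k => l1norm (xs (φ k))) Filter.atTop (nhds xdag) := by
    have := h2.add_const xdag
    simpa using this
  exact ⟨⟨hfeq, hfeas_star, tendsto_nhds_unique h1 h3⟩, ⟨4*((n:ℝ)+m), hC⟩⟩
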